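/- (Reverse converter ebn from compact terms to lambda terms.) There is a function which, for every formula F, maps every compact term of the exp-log normal form of F back to a closed intrinsically typed lambda term of type F, i.e., a function ebn : HSc (enf2cnf (enf F)) → ND [] F, where enf2cnf coerces an ENF to a CNF (the identity on cnf c, and con top (bd d) top on dnf d). -/

import Mathlib

namespace ExpLog

-- Formulas (types) generated by atoms, sums, products and arrows.
inductive Formula : Type
  | prop : ℕ → Formula
  | disj : Formula → Formula → Formula
  | conj : Formula → Formula → Formula
  | impl : Formula → Formula → Formula
  deriving Repr
-- Intrinsically typed lambda terms (natural deduction proofs) with de Bruijn indices.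
inductive ND : List Formula → Formula → Type
  | hyp  {Γ A} : ND (A :: Γ) A
  | wkn  {Γ A B} : ND Γ A → ND (B :: Γ) A
  | lam  {Γ A B} : ND (A :: Γ) B → ND Γ (.impl A B)
  | app  {Γ A B} : ND Γ (.impl A B) → ND Γ A → ND Γ B
  | pair {Γ A B} : ND Γ A → ND Γ B → ND Γ (.conj A B)
  | fst  {Γ A B} : ND Γ (.conj A B) → ND Γ A
  | snd  {Γ A B} : ND Γ (.conj A B) → ND Γ B
  | inl  {Γ A B} : ND Γ A → ND Γ (.disj A B)
  | inr  {Γ A B} : ND Γ B → ND Γ (.disj A B)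
  | cas  {Γ A B C} : ND Γ (.disj A B) → ND (A :: Γ) C → ND (B :: Γ) C → ND Γ C
-- The mutually inductive grammar of exp-log normal forms:
-- conjunctive normal forms (CNF), disjunctive normal forms (DNF), and base types.
mutual
inductive CNF : Type
  | top : CNF
  | con : CNF → Base → CNF → CNF
  deriving Repr

inductive DNF : Type
  | two : CNF → CNF → DNF
  | dis : CNF → DNF → DNF
  deriving Repr

inductive Base : Type
  | prp : ℕ → Base
  | bd  : DNF → Base
  deriving Repr
end

/-- Exp-log normal forms: either a CNF or a DNF. -/
inductive ENF : Type
  | cnf : CNF → ENF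
  | dnf : DNF → ENF
  deriving Repr

/-- Flattening of `+`-associativity (auxiliary). -/
def nplus1 : DNF → ENF → DNF
  | .two c c0, .cnf c1 => .dis c (.two c0 c1)
  | .two c c0, .dnf d0 => .dis c (.dis c0 d0)
  | .dis c d0, e2 => .dis c (nplus1 d0 e2)

/-- Flattened n-ary sum of two ENFs. -/
def nplus : ENF → ENF → DNF
  | .cnf a, .cnf c => .two a c
  | .cnf a, .dnf d => .dis a d
  | .dnf b, e2 => nplus1 b e2

/-- Flattened n-ary product of two CNFs. -/
def ntimes : CNF → CNF → CNF
  | .top, c2 => c2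
  | .con c10 d c13, c2 => .con c10 d (ntimes c13 c2)

/-- Distributivity of a CNF over a DNF. -/
def distrib0 : CNF → DNF → ENF
  | c, .two c0 c1 => .dnf (.two (ntimes c c0) (ntimes c c1))
  | c, .dis c0 d0 =>
      .dnf (match distrib0 c d0 with
            | .cnf c1 => .two (ntimes c c0) c1
            | .dnf d1 => .dis (ntimes c c0) d1)

/-- Distributivity of a CNF over an ENF. -/
def distrib1 : CNF → ENF → ENF
  | c, .cnf a => .cnf (ntimes c a)
  | c, .dnf b => distrib0 c b

/-- The exp-log rewriting `b^(c₁+⋯+cₙ) ⇝ b^c₁ ⋯ b^cₙ`. -/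
def explog0 : Base → DNF → CNF
  | b, .two c1 c2 => ntimes (.con c1 b .top) (.con c2 b .top)
  | b, .dis c d3 => ntimes (.con c b .top) (explog0 b d3)

/-- The exp-log rewriting of `b^e` for an ENF exponent `e`. -/
def explog1 : Base → ENF → CNF
  | d, .cnf c => .con c d .top
  | d, .dnf d1 => explog0 d d1

/-- Distributivity of a DNF over an ENF. -/
def distribn : DNF → ENF → ENF
  | .two c c0, e2 => .dnf (nplus (distrib1 c e2) (distrib1 c0 e2))
  | .dis c d0, e2 => .dnf (nplus (distrib1 c e2) (distribn d0 e2))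

/-- Distributivity of an ENF over an ENF. -/
def distrib : ENF → ENF → ENF
  | .cnf a, e2 => distrib1 a e2
  | .dnf b, e2 => distribn b e2

/-- The exp-log rewriting of `c^{e₂}` (pointwise currying). -/
def explogn : CNF → ENF → CNF
  | .top, _ => .top
  | .con c1 d c2, e2 => ntimes (explog1 d (distrib1 c1 e2)) (explogn c2 e2)

/-- The CNF corresponding to an atomic type: `(1→p)×1`, identified with `p`. -/
def p2c (p : ℕ) : CNF := .con .top (.prp p) .top

def b2c : Base → CNF
  | .prp p => p2c p
  | .bd d => .con .top (.bd d) .top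

/-- Coercion of an ENF to a CNF. -/
def enf2cnf : ENF → CNF
  | .cnf c => c
  | .dnf d => b2c (.bd d)
/-- The structurally recursive exp-log normalization of a formula. -/
def enf : Formula → ENF
  | .prop p => .cnf (p2c p)
  | .disj f0 f1 => .dnf (nplus (enf f0) (enf f1))
  | .conj f0 f1 => distrib (enf f0) (enf f1)
  | .impl f0 f1 => .cnf (explogn (enf2cnf (enf f1)) (enf f0))
-- The intrinsically typed compact terms: HSc (at product/CNF type) and HSb (at base type).
mutual
inductive HSc : CNF → Type
  | tt : HSc .top
  | pair {c1 b c2} : HSb c1 b → HSc c2 → HSc (.con c1 b c2)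

inductive HSb : CNF → Base → Type
  | app {p c0 c1 c2} :
      HSc (explogn c1 (.cnf (ntimes c2 (.con c1 (.prp p) c0)))) →
      HSb (ntimes c2 (.con c1 (.prp p) c0)) (.prp p)
  | cas {d b c0 c1 c2 c3} :
      HSc (explogn c1 (.cnf (ntimes c2 (.con c1 (.bd d) c0)))) →
      HSc (explogn (explog0 b d) (.cnf (ntimes c3 (ntimes c2 (.con c1 (.bd d) c0))))) →
      HSb (ntimes c3 (ntimes c2 (.con c1 (.bd d) c0))) b
  | wkn {c0 c1 b1 b} : HSb c0 b → HSb (.con c1 b1 c0) b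
  | inl_two {c0 c1 c2} : HSc (explogn c1 (.cnf c0)) → HSb c0 (.bd (.two c1 c2))
  | inr_two {c0 c1 c2} : HSc (explogn c2 (.cnf c0)) → HSb c0 (.bd (.two c1 c2))
  | inl_dis {c0 c d} : HSc (explogn c (.cnf c0)) → HSb c0 (.bd (.dis c d))
  | inr_dis {c0 c d} : HSb c0 (.bd d) → HSb c0 (.bd (.dis c d))
end

/-! Every step of the exp-log normalization is a high-school identity
(`a·(b+c) = ab+ac`, `aᵇ⁺ᶜ = aᵇaᶜ`, `(aᵇ)ᶜ = aᵇᶜ`, …), and each such identity holds between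
formulas up to interderivability, uniformly in the context. Reading normal forms back as
formulas, `enf F` is therefore interderivable with `F`. A compact term at a CNF denotes a closed
derivation of the formula it reads back to: the application and case constructors of compact
terms are modus ponens and disjunction elimination, once the normal forms in their indices are
unfolded by the same identities. -/

/-- `Formula` has no constant for truth; `p₀ → p₀` serves as the empty product of a CNF. -/
def Formula.truth : Formula := .impl (.prop 0) (.prop 0)

def ND.truthIntro {Γ : List Formula} : ND Γ .truth := .lam .hyp

/-- Interderivability, witnessed by translations of derivations that are uniform in the
context (so that they can be used under binders). -/
structure Interderivable (A B : Formula) : Type where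
  mp : ∀ {Γ : List Formula}, ND Γ A → ND Γ B
  mpr : ∀ {Γ : List Formula}, ND Γ B → ND Γ A

infix:25 " ⊣⊢ " => Interderivable

namespace Interderivable

open ND

variable {A A' B B' C : Formula}

def refl (A : Formula) : A ⊣⊢ A := ⟨id, id⟩

def ofEq (h : A = B) : A ⊣⊢ B := h ▸ refl A

def symm (h : A ⊣⊢ B) : B ⊣⊢ A := ⟨h.mpr, h.mp⟩

def trans (h : A ⊣⊢ B) (k : B ⊣⊢ C) : A ⊣⊢ C := ⟨k.mp ∘ h.mp, h.mpr ∘ k.mpr⟩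

instance : Trans Interderivable Interderivable Interderivable := ⟨trans⟩

def conjCongr (h : A ⊣⊢ A') (k : B ⊣⊢ B') : A.conj B ⊣⊢ A'.conj B' where
  mp t := pair (h.mp (fst t)) (k.mp (snd t))
  mpr t := pair (h.mpr (fst t)) (k.mpr (snd t))

def disjCongr (h : A ⊣⊢ A') (k : B ⊣⊢ B') : A.disj B ⊣⊢ A'.disj B' where
  mp t := cas t (inl (h.mp hyp)) (inr (k.mp hyp))
  mpr t := cas t (inl (h.mpr hyp)) (inr (k.mpr hyp))

def implCongr (h : A ⊣⊢ A') (k : B ⊣⊢ B') : A.impl B ⊣⊢ A'.impl B' where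
  mp t := lam (k.mp (app (wkn t) (h.mpr hyp)))
  mpr t := lam (k.mpr (app (wkn t) (h.mp hyp)))

def conjComm (A B : Formula) : A.conj B ⊣⊢ B.conj A where
  mp t := pair (snd t) (fst t)
  mpr t := pair (snd t) (fst t)

def conjAssoc (A B C : Formula) : (A.conj B).conj C ⊣⊢ A.conj (B.conj C) where
  mp t := pair (fst (fst t)) (pair (snd (fst t)) (snd t))
  mpr t := pair (pair (fst t) (fst (snd t))) (snd (snd t))

def disjAssoc (A B C : Formula) : (A.disj B).disj C ⊣⊢ A.disj (B.disj C) where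
  mp t := cas t (cas hyp (inl hyp) (inr (inl hyp))) (inr (inr hyp))
  mpr t := cas t (inl (inl hyp)) (cas hyp (inl (inr hyp)) (inr hyp))

def conjDisjDistrib (A B C : Formula) : A.conj (B.disj C) ⊣⊢ (A.conj B).disj (A.conj C) where
  mp t := cas (snd t) (inl (pair (fst (wkn t)) hyp)) (inr (pair (fst (wkn t)) hyp))
  mpr t := cas t (pair (fst hyp) (inl (snd hyp))) (pair (fst hyp) (inr (snd hyp)))

def disjConjDistrib (A B C : Formula) : (A.disj B).conj C ⊣⊢ (A.conj C).disj (B.conj C) :=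
  calc (A.disj B).conj C ⊣⊢ C.conj (A.disj B) := conjComm _ _
    _ ⊣⊢ (C.conj A).disj (C.conj B) := conjDisjDistrib _ _ _
    _ ⊣⊢ (A.conj C).disj (B.conj C) := disjCongr (conjComm _ _) (conjComm _ _)

def implDisj (A B C : Formula) : (A.disj B).impl C ⊣⊢ (A.impl C).conj (B.impl C) where
  mp t := pair (lam (app (wkn t) (inl hyp))) (lam (app (wkn t) (inr hyp)))
  mpr t := lam (cas hyp (app (fst (wkn (wkn t))) hyp) (app (snd (wkn (wkn t))) hyp))

def implConj (A B C : Formula) : A.impl (B.conj C) ⊣⊢ (A.impl B).conj (A.impl C) where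
  mp t := pair (lam (fst (app (wkn t) hyp))) (lam (snd (app (wkn t) hyp)))
  mpr t := lam (pair (app (fst (wkn t)) hyp) (app (snd (wkn t)) hyp))

def curry (A B C : Formula) : (A.conj B).impl C ⊣⊢ A.impl (B.impl C) where
  mp t := lam (lam (app (wkn (wkn t)) (pair (wkn hyp) hyp)))
  mpr t := lam (app (app (wkn t) (fst hyp)) (snd hyp))

def conjTruth (A : Formula) : A.conj .truth ⊣⊢ A where
  mp t := fst t
  mpr t := pair t truthIntro

def truthConj (A : Formula) : Formula.truth.conj A ⊣⊢ A :=
  (conjComm _ _).trans (conjTruth A)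

def truthImpl (A : Formula) : Formula.truth.impl A ⊣⊢ A where
  mp t := app t truthIntro
  mpr t := lam (wkn t)

def implTruth (A : Formula) : A.impl .truth ⊣⊢ .truth where
  mp _ := truthIntro
  mpr _ := lam truthIntro

end Interderivable

mutual
def c2f : CNF → Formula
  | .top => .truth
  | .con c1 b c2 => .conj (.impl (c2f c1) (b2f b)) (c2f c2)

def b2f : Base → Formula
  | .prp p => .prop p
  | .bd d => d2f d

def d2f : DNF → Formula
  | .two c1 c2 => .disj (c2f c1) (c2f c2)
  | .dis c d => .disj (c2f c) (d2f d)
end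

def e2f : ENF → Formula
  | .cnf c => c2f c
  | .dnf d => d2f d

theorem e2f_distrib0_dis (c c0 : CNF) (d : DNF) :
    e2f (distrib0 c (.dis c0 d)) = .disj (c2f (ntimes c c0)) (e2f (distrib0 c d)) := by
  rw [distrib0]
  cases distrib0 c d <;> rfl

namespace Interderivable

open Formula

def c2fNtimes : ∀ a b : CNF, c2f (ntimes a b) ⊣⊢ conj (c2f a) (c2f b)
  | .top, _ => (truthConj _).symm
  | .con _ _ c2, b => (conjCongr (refl _) (c2fNtimes c2 b)).trans (conjAssoc _ _ _).symm

def c2fSingleton (c : CNF) (b : Base) : c2f (.con c b .top) ⊣⊢ impl (c2f c) (b2f b) :=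
  conjTruth _

def d2fNplus1 : ∀ (d : DNF) (e : ENF), d2f (nplus1 d e) ⊣⊢ disj (d2f d) (e2f e)
  | .two _ _, .cnf _ => (disjAssoc _ _ _).symm
  | .two _ _, .dnf _ => (disjAssoc _ _ _).symm
  | .dis _ d, e => (disjCongr (refl _) (d2fNplus1 d e)).trans (disjAssoc _ _ _).symm

def d2fNplus : ∀ e1 e2 : ENF, d2f (nplus e1 e2) ⊣⊢ disj (e2f e1) (e2f e2)
  | .cnf _, .cnf _ => refl _
  | .cnf _, .dnf _ => refl _
  | .dnf d, e => d2fNplus1 d e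

def e2fDistrib0 : ∀ (c : CNF) (d : DNF), e2f (distrib0 c d) ⊣⊢ conj (c2f c) (d2f d)
  | c, .two c0 c1 => (disjCongr (c2fNtimes c c0) (c2fNtimes c c1)).trans
      (conjDisjDistrib _ _ _).symm
  | c, .dis c0 d => (ofEq (e2f_distrib0_dis c c0 d)).trans <|
      (disjCongr (c2fNtimes c c0) (e2fDistrib0 c d)).trans (conjDisjDistrib _ _ _).symm

def e2fDistrib1 : ∀ (c : CNF) (e : ENF), e2f (distrib1 c e) ⊣⊢ conj (c2f c) (e2f e)
  | c, .cnf a => c2fNtimes c a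
  | c, .dnf d => e2fDistrib0 c d

def e2fDistribn : ∀ (d : DNF) (e : ENF), e2f (distribn d e) ⊣⊢ conj (d2f d) (e2f e)
  | .two c c0, e => (d2fNplus _ _).trans <|
      (disjCongr (e2fDistrib1 c e) (e2fDistrib1 c0 e)).trans (disjConjDistrib _ _ _).symm
  | .dis c d, e => (d2fNplus _ _).trans <|
      (disjCongr (e2fDistrib1 c e) (e2fDistribn d e)).trans (disjConjDistrib _ _ _).symm

def e2fDistrib : ∀ e1 e2 : ENF, e2f (distrib e1 e2) ⊣⊢ conj (e2f e1) (e2f e2)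
  | .cnf c, e => e2fDistrib1 c e
  | .dnf d, e => e2fDistribn d e

def c2fExplog0 : ∀ (b : Base) (d : DNF), c2f (explog0 b d) ⊣⊢ impl (d2f d) (b2f b)
  | b, .two c1 c2 => (c2fNtimes _ _).trans <|
      (conjCongr (c2fSingleton c1 b) (c2fSingleton c2 b)).trans (implDisj _ _ _).symm
  | b, .dis c d => (c2fNtimes _ _).trans <|
      (conjCongr (c2fSingleton c b) (c2fExplog0 b d)).trans (implDisj _ _ _).symm

def c2fExplog1 : ∀ (b : Base) (e : ENF), c2f (explog1 b e) ⊣⊢ impl (e2f e) (b2f b)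
  | b, .cnf c => c2fSingleton c b
  | b, .dnf d => c2fExplog0 b d

def c2fExplogn : ∀ (c : CNF) (e : ENF), c2f (explogn c e) ⊣⊢ impl (e2f e) (c2f c)
  | .top, _ => (implTruth _).symm
  | .con c1 b c2, e =>
    calc c2f (explogn (.con c1 b c2) e)
        ⊣⊢ conj (impl (e2f (distrib1 c1 e)) (b2f b)) (impl (e2f e) (c2f c2)) :=
          (c2fNtimes _ _).trans (conjCongr (c2fExplog1 _ _) (c2fExplogn c2 e))
      _ ⊣⊢ conj (impl (conj (e2f e) (c2f c1)) (b2f b)) (impl (e2f e) (c2f c2)) :=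
          conjCongr (implCongr ((e2fDistrib1 c1 e).trans (conjComm _ _)) (refl _)) (refl _)
      _ ⊣⊢ conj (impl (e2f e) (impl (c2f c1) (b2f b))) (impl (e2f e) (c2f c2)) :=
          conjCongr (curry _ _ _) (refl _)
      _ ⊣⊢ impl (e2f e) (c2f (.con c1 b c2)) := (implConj _ _ _).symm

def c2fEnf2cnf : ∀ e : ENF, c2f (enf2cnf e) ⊣⊢ e2f e
  | .cnf _ => refl _
  | .dnf d => (c2fSingleton .top (.bd d)).trans (truthImpl _)

def e2fEnf : ∀ F : Formula, e2f (enf F) ⊣⊢ F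
  | .prop p => (c2fSingleton .top (.prp p)).trans (truthImpl _)
  | .disj F G => (d2fNplus _ _).trans (disjCongr (e2fEnf F) (e2fEnf G))
  | .conj F G => (e2fDistrib _ _).trans (conjCongr (e2fEnf F) (e2fEnf G))
  | .impl F G => (c2fExplogn _ _).trans
      (implCongr (e2fEnf F) ((c2fEnf2cnf _).trans (e2fEnf G)))

end Interderivable

open Interderivable ND

mutual
def HSc.eval {Γ : List Formula} : ∀ {c : CNF}, HSc c → ND Γ (c2f c)
  | _, .tt => truthIntro
  | _, .pair f t => pair (lam (f.eval hyp)) t.eval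

def HSb.eval {Γ : List Formula} : ∀ {c : CNF} {b : Base}, HSb c b → ND Γ (c2f c) → ND Γ (b2f b)
  | _, _, .app (c0 := c0) (c1 := c1) (c2 := c2) (p := p) t, x =>
    let hd := fst (snd ((c2fNtimes c2 (.con c1 (.prp p) c0)).mp x))
    app hd (app ((c2fExplogn _ _).mp t.eval) x)
  | _, _, .cas (d := d) (c0 := c0) (c1 := c1) (c2 := c2) (c3 := c3) t u, x =>
    let y := snd ((c2fNtimes c3 _).mp x)
    let hd := fst (snd ((c2fNtimes c2 (.con c1 (.bd d) c0)).mp y))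
    app ((c2fExplog0 _ d).mp (app ((c2fExplogn _ _).mp u.eval) x))
      (app hd (app ((c2fExplogn _ _).mp t.eval) y))
  | _, _, .wkn f, x => f.eval (snd x)
  | _, _, .inl_two t, x => inl (app ((c2fExplogn _ _).mp t.eval) x)
  | _, _, .inr_two t, x => inr (app ((c2fExplogn _ _).mp t.eval) x)
  | _, _, .inl_dis t, x => inl (app ((c2fExplogn _ _).mp t.eval) x)
  | _, _, .inr_dis f, x => inr (f.eval x)
end

def ebn (F : Formula) (t : HSc (enf2cnf (enf F))) : ND [] F :=
  (e2fEnf F).mp ((c2fEnf2cnf (enf F)).mp t.eval)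

/-- The reverse converter `ebn`: every compact term at the
exp-log normal form of `F` can be mapped back to a closed lambda term of
type `F`. -/
theorem ebn_exists :
    Nonempty (∀ F : Formula, HSc (enf2cnf (enf F)) → ND [] F) :=
  ⟨ebn⟩

end ExpLog
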